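/- Assume the lattice is minimal and elliptic and admits an elliptic sequence (s; B_0,…,B_m; Z_{B_0},…,Z_{B_m}) with C_{−1} = s and C_t = s + ∑_{i=0}^{t} Z_{B_i}. Then for every 0 ≤ j ≤ m: χ(Z_{B_j}) = 0, and (E_v, C_{j−1}) = 0 for every v ∈ B_j; in particular (E_v, s) = 0 for all v ∈ B_0 and (E_v, Z_{B_i}) = 0 for all i < j and v ∈ B_j. Consequently: (Z_{B_i}, Z_{B_j}) = 0 for all i ≠ j; χ(C_t) = 0 and χ(Z_K − C_t) = 0 for every −1 ≤ t ≤ m; and (E_v, Z_K − C_{j−1}) = (E_v,E_v)+2 for every v ∈ B_j, i.e. Z_K − C_{j−1} is the canonical cycle of the subgraph supported on B_j. -/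

import Mathlib

open scoped BigOperators

/-- A negative definite lattice on the free ℤ-module with basis indexed by `V`,
realized inside the ℚ-vector space `V → ℚ`.  The basis vector `E_v` is `Pi.single v 1`,
the symmetric bilinear form `B` takes integer values on basis vectors, is negative
definite, and has nonnegative off-diagonal entries. -/
structure LatticeData (V : Type*) [Fintype V] [DecidableEq V] where
  B : (V → ℚ) →ₗ[ℚ] (V → ℚ) →ₗ[ℚ] ℚ
  symm : ∀ x y, B x y = B y x
  int_basis : ∀ u v : V, ∃ n : ℤ, B (Pi.single u 1) (Pi.single v 1) = (n : ℚ)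
  negdef : ∀ x : V → ℚ, x ≠ 0 → B x x < 0
  offdiag : ∀ u v : V, u ≠ v → (0 : ℚ) ≤ B (Pi.single u 1) (Pi.single v 1)

variable {V : Type*} [Fintype V] [DecidableEq V]

/-- The basis vector `E_v`. -/
def Ev (v : V) : V → ℚ := Pi.single v 1

/-- `x` lies in the lattice `L` (has integral coefficients). -/
def inL (x : V → ℚ) : Prop := ∀ v, ∃ n : ℤ, x v = (n : ℚ)

/-- The support `|x|` of a cycle. -/
def supp (x : V → ℚ) : Set V := {v | x v ≠ 0}

/-- `x ∈ L'`, the dual lattice: all pairings with basis vectors are integers. -/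
def inLd (D : LatticeData V) (x : V → ℚ) : Prop := ∀ v, ∃ n : ℤ, D.B x (Ev v) = (n : ℚ)

/-- `x ∈ S'`: the antinef cone of the dual lattice. -/
def inS' (D : LatticeData V) (x : V → ℚ) : Prop := inLd D x ∧ ∀ v, D.B x (Ev v) ≤ 0

/-- The Riemann–Roch expression `χ(x) = -(x, x - Z_K)/2`. -/
def chi (D : LatticeData V) (ZK x : V → ℚ) : ℚ := -(D.B x (x - ZK)) / 2

/-- `ZK` is the (anti)canonical cycle: `(Z_K, E_v) = (E_v,E_v) + 2` for all `v`. -/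
def IsCanonical (D : LatticeData V) (ZK : V → ℚ) : Prop :=
  ∀ v, D.B ZK (Ev v) = D.B (Ev v) (Ev v) + 2

/-- The lattice is minimal: all self-intersections are at most `-2`. -/
def IsMinimal (D : LatticeData V) : Prop := ∀ v : V, D.B (Ev v) (Ev v) ≤ -2

/-- The lattice is elliptic: `χ(l) ≥ 0` for all `l ∈ L`, `l > 0`, with value 0 attained. -/
def Elliptic (D : LatticeData V) (ZK : V → ℚ) : Prop :=
  (∀ l : V → ℚ, inL l → 0 ≤ l → l ≠ 0 → 0 ≤ chi D ZK l) ∧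
  (∃ l : V → ℚ, inL l ∧ 0 ≤ l ∧ l ≠ 0 ∧ chi D ZK l = 0)

/-- The dual graph: `u ≠ v` are adjacent iff `(E_u, E_v) > 0`. -/
def dualGraph (D : LatticeData V) : SimpleGraph V where
  Adj u v := u ≠ v ∧ 0 < D.B (Ev u) (Ev v)
  symm := by
    constructor
    intro u v h
    exact ⟨h.1.symm, by rw [D.symm]; exact h.2⟩
  loopless := by
    constructor
    intro u h
    exact h.1 rfl

theorem test_preamble : True := trivial

/-- An elliptic sequence `(s; B_0 ⊇ ⋯ ⊇ B_m; Z_{B_0}, …, Z_{B_m})` for the lattice,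
following the conventions of the paper: `s` is the minimal antinef representative
of the class of `Z_K` (`s = 0` when `Z_K ∈ L`), `Bset j` is the support `B_j`,
and `Z j` is the fundamental cycle `Z_{B_j}` of `B_j` (for `0 ≤ j ≤ m`). -/
structure EllSeq (D : LatticeData V) (ZK : V → ℚ) where
  s : V → ℚ
  m : ℕ
  Bset : ℕ → Set V
  Z : ℕ → (V → ℚ)
  hs_S' : inS' D s
  hs_int : inL (ZK - s)
  hs_min : ∀ t : V → ℚ, inS' D t → inL (ZK - t) → s ≤ t
  hB0_not : ¬ inL ZK → Bset 0 = supp (ZK - s)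
  hB0_in : inL ZK → Bset 0 = Set.univ
  hmono : ∀ j, j < m → Bset (j + 1) ⊆ Bset j
  hZ_int : ∀ j, j ≤ m → inL (Z j)
  hZ_pos : ∀ j, j ≤ m → 0 ≤ Z j ∧ Z j ≠ 0
  hZ_supp : ∀ j, j ≤ m → supp (Z j) ⊆ Bset j
  hZ_anti : ∀ j, j ≤ m → ∀ u ∈ Bset j, D.B (Z j) (Ev u) ≤ 0
  hZ_min : ∀ j, j ≤ m → ∀ x : V → ℚ, inL x → 0 ≤ x → x ≠ 0 → supp x ⊆ Bset j →
      (∀ u ∈ Bset j, D.B x (Ev u) ≤ 0) → Z j ≤ x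
  hBnext : ∀ j, j < m → Bset (j + 1) = supp (ZK - s - ∑ i ∈ Finset.range (j + 1), Z i)
  hsum : ZK = s + ∑ i ∈ Finset.range (m + 1), Z i

/-!
Write `S_j = Z_K - C_{j-1} = Z_{B_j} + ⋯ + Z_{B_m}`. Since `χ(S_j) = (S_j, C_{j-1})/2`, it vanishes
as soon as `C_{j-1}` is orthogonal to `B_j ⊇ |S_j|`. Then
`0 = χ(S_j) = χ(Z_{B_j}) + χ(S_{j+1}) - (Z_{B_j}, S_{j+1})`, where ellipticity makes the first two
terms nonnegative and the antinefness of `Z_{B_j}` on `B_j ⊇ B_{j+1} = |S_{j+1}|` makes the last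
one nonpositive. So all three vanish, and the last one, a sum of nonpositive terms, vanishes
termwise: `Z_{B_j}` is orthogonal to `B_{j+1}`, which carries the orthogonality over to `C_j`.
The induction starts from `0 ≤ χ(Z_K - s) = (Z_K - s, s)/2 ≤ 0`, which vanishes termwise in the
same way on `B_0 = |Z_K - s|`; when `Z_K ∈ L`, the minimality of `s` forces `s = 0`.
-/

theorem inL_sum {ι W : Type*} (s : Finset ι) (f : ι → W → ℚ) (h : ∀ i ∈ s, inL (f i)) :
    inL (∑ i ∈ s, f i) :=
  Finset.sum_induction f inL
    (fun a b ha hb v => by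
      obtain ⟨n, hn⟩ := ha v
      obtain ⟨k, hk⟩ := hb v
      exact ⟨n + k, by simp [hn, hk]⟩)
    (fun _ => ⟨0, by simp⟩) h

namespace LatticeData

variable (D : LatticeData V)

theorem B_eq_sum (x y : V → ℚ) : D.B x y = ∑ v, x v * D.B (Ev v) y := by
  have hx : x = ∑ v, x v • Ev v := by
    funext u
    simp [Ev, Finset.sum_apply, Pi.single_apply]
  conv_lhs => rw [hx]
  simp [map_sum, map_smul, LinearMap.sum_apply, LinearMap.smul_apply, smul_eq_mul]

variable {D}

theorem B_eq_zero_of_forall_supp {x y : V → ℚ} (h : ∀ v ∈ supp x, D.B (Ev v) y = 0) :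
    D.B x y = 0 := by
  rw [B_eq_sum]
  refine Finset.sum_eq_zero fun v _ => ?_
  by_cases hv : x v = 0
  · rw [hv, zero_mul]
  · rw [h v hv, mul_zero]

theorem mul_B_Ev_nonpos {x y : V → ℚ} (hx : 0 ≤ x) (hy : ∀ v ∈ supp x, D.B (Ev v) y ≤ 0)
    (v : V) : x v * D.B (Ev v) y ≤ 0 := by
  by_cases hv : x v = 0
  · rw [hv, zero_mul]
  · exact mul_nonpos_of_nonneg_of_nonpos (hx v) (hy v hv)

theorem B_nonpos_of_nonneg {x y : V → ℚ} (hx : 0 ≤ x) (hy : ∀ v ∈ supp x, D.B (Ev v) y ≤ 0) :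
    D.B x y ≤ 0 := by
  rw [B_eq_sum]
  exact Finset.sum_nonpos fun v _ => mul_B_Ev_nonpos hx hy v

theorem B_Ev_eq_zero_of_B_nonneg {x y : V → ℚ} (hx : 0 ≤ x)
    (hy : ∀ v ∈ supp x, D.B (Ev v) y ≤ 0) (hxy : 0 ≤ D.B x y) :
    ∀ v ∈ supp x, D.B (Ev v) y = 0 := by
  intro v hv
  have hsum : ∑ u, x u * D.B (Ev u) y = 0 := by
    rw [← B_eq_sum]
    exact le_antisymm (B_nonpos_of_nonneg hx hy) hxy
  have hterm := (Finset.sum_eq_zero_iff_of_nonpos fun u _ => mul_B_Ev_nonpos hx hy u).1 hsum v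
    (Finset.mem_univ v)
  exact (mul_eq_zero.mp hterm).resolve_left hv

theorem eq_zero_of_nonpos_of_antinef {x : V → ℚ} (hx : x ≤ 0) (hanti : ∀ v, D.B x (Ev v) ≤ 0) :
    x = 0 := by
  by_contra hne
  have hxx : 0 ≤ D.B x x := by
    rw [B_eq_sum]
    refine Finset.sum_nonneg fun v _ => mul_nonneg_of_nonpos_of_nonpos (hx v) ?_
    rw [D.symm]
    exact hanti v
  exact (D.negdef x hne).not_ge hxx

end LatticeData

section Chi

variable (D : LatticeData V) (ZK : V → ℚ)

theorem chi_eq_half_B (x : V → ℚ) : chi D ZK x = D.B x (ZK - x) / 2 := by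
  simp only [chi, map_sub]
  ring

theorem chi_zero : chi D ZK 0 = 0 := by
  simp [chi]

theorem chi_ZK_sub (x : V → ℚ) : chi D ZK (ZK - x) = chi D ZK x := by
  simp only [chi, map_sub, LinearMap.sub_apply]
  linear_combination (D.symm ZK x) / 2

theorem chi_add (x y : V → ℚ) : chi D ZK (x + y) = chi D ZK x + chi D ZK y - D.B x y := by
  simp only [chi, map_sub, map_add, LinearMap.add_apply]
  linear_combination (D.symm x y) / 2

end Chi

namespace EllSeq

variable {D : LatticeData V} {ZK : V → ℚ} (seq : EllSeq D ZK)

/-- `seq.C t` is the paper's `C_{t-1}`; thus `seq.C 0 = s` and `seq.C (m + 1) = Z_K`. -/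
def C (t : ℕ) : V → ℚ := seq.s + ∑ i ∈ Finset.range t, seq.Z i

theorem C_zero : seq.C 0 = seq.s := by
  simp [C]

theorem C_succ (t : ℕ) : seq.C (t + 1) = seq.C t + seq.Z t := by
  simp [C, Finset.sum_range_succ, add_assoc]

theorem ZK_sub_C_eq_sum {t : ℕ} (ht : t ≤ seq.m + 1) :
    ZK - seq.C t = ∑ i ∈ Finset.Ico t (seq.m + 1), seq.Z i := by
  rw [Finset.sum_Ico_eq_sub _ ht, C]
  linear_combination seq.hsum

theorem ZK_sub_C_last : ZK - seq.C (seq.m + 1) = 0 := by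
  simp [seq.ZK_sub_C_eq_sum le_rfl]

theorem ZK_sub_C_eq_Z_add (t : ℕ) : ZK - seq.C t = seq.Z t + (ZK - seq.C (t + 1)) := by
  rw [C_succ]
  abel

theorem ZK_sub_C_nonneg {t : ℕ} (ht : t ≤ seq.m + 1) : 0 ≤ ZK - seq.C t := by
  rw [seq.ZK_sub_C_eq_sum ht]
  exact Finset.sum_nonneg fun i hi => (seq.hZ_pos i (by simp at hi; omega)).1

theorem ZK_sub_C_inL {t : ℕ} (ht : t ≤ seq.m + 1) : inL (ZK - seq.C t) := by
  rw [seq.ZK_sub_C_eq_sum ht]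
  exact inL_sum _ _ fun i hi => seq.hZ_int i (by simp at hi; omega)

theorem ZK_sub_C_ne_zero {t : ℕ} (ht : t ≤ seq.m) : ZK - seq.C t ≠ 0 := by
  rw [seq.ZK_sub_C_eq_Z_add t]
  intro h
  have hZ : seq.Z t ≤ 0 := by
    rw [← h]
    exact le_add_of_nonneg_right (seq.ZK_sub_C_nonneg (by omega))
  exact (seq.hZ_pos t ht).2 (le_antisymm hZ (seq.hZ_pos t ht).1)

theorem supp_ZK_sub_C_subset {t : ℕ} (ht : t ≤ seq.m) : supp (ZK - seq.C t) ⊆ seq.Bset t := by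
  cases t with
  | zero =>
    by_cases hZK : inL ZK
    · simp [seq.hB0_in hZK]
    · rw [seq.hB0_not hZK, C_zero]
  | succ n =>
    rw [seq.hBnext n ht, C, sub_add_eq_sub_sub]

theorem supp_ZK_sub_C_succ {n : ℕ} (hn : n < seq.m) :
    supp (ZK - seq.C (n + 1)) = seq.Bset (n + 1) := by
  rw [seq.hBnext n hn, C, sub_add_eq_sub_sub]

theorem Bset_antitone {a b : ℕ} (hab : a ≤ b) (hb : b ≤ seq.m) : seq.Bset b ⊆ seq.Bset a := by
  induction b, hab using Nat.le_induction with
  | base => exact subset_rfl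
  | succ n _ ih => exact (seq.hmono n hb).trans (ih (by omega))

theorem s_eq_zero_of_inL (hZK : inL ZK) : seq.s = 0 :=
  LatticeData.eq_zero_of_nonpos_of_antinef
    (seq.hs_min 0 ⟨fun _ => ⟨0, by simp⟩, fun _ => by simp⟩ (by simpa using hZK))
    seq.hs_S'.2

theorem Z_antinef_on_supp_ZK_sub_C_succ {j : ℕ} (hj : j ≤ seq.m) :
    ∀ v ∈ supp (ZK - seq.C (j + 1)), D.B (Ev v) (seq.Z j) ≤ 0 := by
  intro v hv
  rcases hj.lt_or_eq with hj | rfl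
  · rw [seq.supp_ZK_sub_C_succ hj] at hv
    rw [D.symm]
    exact seq.hZ_anti j hj.le v (seq.hmono j hj hv)
  · rw [seq.ZK_sub_C_last] at hv
    exact (hv rfl).elim

variable {seq}

theorem chi_ZK_sub_C_nonneg (hell : Elliptic D ZK) {t : ℕ} (ht : t ≤ seq.m + 1) :
    0 ≤ chi D ZK (ZK - seq.C t) := by
  rcases ht.lt_or_eq with ht | rfl
  · exact hell.1 _ (seq.ZK_sub_C_inL ht.le) (seq.ZK_sub_C_nonneg ht.le)
      (seq.ZK_sub_C_ne_zero (by omega))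
  · rw [seq.ZK_sub_C_last, chi_zero]

theorem chi_ZK_sub_C_eq_zero_of_orthogonal {t : ℕ} (ht : t ≤ seq.m)
    (hC : ∀ v ∈ seq.Bset t, D.B (Ev v) (seq.C t) = 0) : chi D ZK (ZK - seq.C t) = 0 := by
  rw [chi_eq_half_B, sub_sub_cancel,
    LatticeData.B_eq_zero_of_forall_supp fun v hv => hC v (seq.supp_ZK_sub_C_subset ht hv),
    zero_div]

theorem chi_Z_eq_zero_and_B_eq_zero (hell : Elliptic D ZK) {j : ℕ} (hj : j ≤ seq.m)
    (hS : chi D ZK (ZK - seq.C j) = 0) :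
    chi D ZK (seq.Z j) = 0 ∧ D.B (ZK - seq.C (j + 1)) (seq.Z j) = 0 := by
  rw [seq.ZK_sub_C_eq_Z_add, chi_add, D.symm] at hS
  have hZ := hell.1 _ (seq.hZ_int j hj) (seq.hZ_pos j hj).1 (seq.hZ_pos j hj).2
  have hrest := chi_ZK_sub_C_nonneg hell (seq := seq) (t := j + 1) (by omega)
  have hB := LatticeData.B_nonpos_of_nonneg (seq.ZK_sub_C_nonneg (by omega))
    (seq.Z_antinef_on_supp_ZK_sub_C_succ hj)
  constructor <;> linarith

theorem orthogonal_C_zero (hell : Elliptic D ZK) :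
    ∀ v ∈ seq.Bset 0, D.B (Ev v) (seq.C 0) = 0 := by
  intro v hv
  rw [C_zero]
  by_cases hZK : inL ZK
  · rw [seq.s_eq_zero_of_inL hZK, map_zero]
  · rw [seq.hB0_not hZK] at hv
    have hchi := chi_ZK_sub_C_nonneg hell (seq := seq) (t := 0) (by omega)
    rw [chi_eq_half_B, sub_sub_cancel, C_zero] at hchi
    have hnonneg := seq.ZK_sub_C_nonneg (t := 0) (by omega)
    rw [C_zero] at hnonneg
    refine LatticeData.B_Ev_eq_zero_of_B_nonneg hnonneg (fun u _ => ?_) (by linarith) v hv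
    rw [D.symm]
    exact seq.hs_S'.2 u

theorem B_Ev_Z_eq_zero_of_orthogonal_C (hell : Elliptic D ZK) {j : ℕ} (hj : j < seq.m)
    (hC : ∀ v ∈ seq.Bset j, D.B (Ev v) (seq.C j) = 0) :
    ∀ v ∈ seq.Bset (j + 1), D.B (Ev v) (seq.Z j) = 0 := by
  have hB := (chi_Z_eq_zero_and_B_eq_zero hell hj.le
    (chi_ZK_sub_C_eq_zero_of_orthogonal hj.le hC)).2
  rw [← seq.supp_ZK_sub_C_succ hj]
  exact LatticeData.B_Ev_eq_zero_of_B_nonneg (seq.ZK_sub_C_nonneg (by omega))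
    (seq.Z_antinef_on_supp_ZK_sub_C_succ hj.le) hB.ge

theorem orthogonal_C (hell : Elliptic D ZK) :
    ∀ j ≤ seq.m, ∀ v ∈ seq.Bset j, D.B (Ev v) (seq.C j) = 0
  | 0, _ => orthogonal_C_zero hell
  | n + 1, hn => fun v hv => by
    have ih := orthogonal_C hell n (by omega)
    rw [C_succ, map_add, ih v (seq.hmono n hn hv),
      B_Ev_Z_eq_zero_of_orthogonal_C hell hn ih v hv, add_zero]

theorem B_Ev_Z_eq_zero (hell : Elliptic D ZK) {i j : ℕ} (hij : i < j) (hj : j ≤ seq.m) :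
    ∀ v ∈ seq.Bset j, D.B (Ev v) (seq.Z i) = 0 := fun v hv =>
  B_Ev_Z_eq_zero_of_orthogonal_C hell (by omega) (orthogonal_C hell i (by omega)) v
    (seq.Bset_antitone hij hj hv)

theorem B_Z_Z_eq_zero_of_lt (hell : Elliptic D ZK) {i j : ℕ} (hij : i < j) (hj : j ≤ seq.m) :
    D.B (seq.Z j) (seq.Z i) = 0 :=
  LatticeData.B_eq_zero_of_forall_supp fun v hv =>
    B_Ev_Z_eq_zero hell hij hj v (seq.hZ_supp j hj hv)

theorem chi_ZK_sub_C_eq_zero (hell : Elliptic D ZK) {t : ℕ} (ht : t ≤ seq.m + 1) :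
    chi D ZK (ZK - seq.C t) = 0 := by
  rcases ht.lt_or_eq with ht | rfl
  · exact chi_ZK_sub_C_eq_zero_of_orthogonal (by omega) (orthogonal_C hell t (by omega))
  · rw [seq.ZK_sub_C_last, chi_zero]

end EllSeq

open EllSeq in
theorem statement11_general {V : Type*} [Fintype V] [DecidableEq V]
    (D : LatticeData V) (ZK : V → ℚ) (hZK : IsCanonical D ZK)
    (hell : Elliptic D ZK)
    (seq : EllSeq D ZK) :
    (∀ j ≤ seq.m, chi D ZK (seq.Z j) = 0) ∧
    (∀ j ≤ seq.m, ∀ v ∈ seq.Bset j,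
        D.B (Ev v) (seq.s + ∑ i ∈ Finset.range j, seq.Z i) = 0) ∧
    (∀ v ∈ seq.Bset 0, D.B (Ev v) seq.s = 0) ∧
    (∀ i j : ℕ, i < j → j ≤ seq.m → ∀ v ∈ seq.Bset j, D.B (Ev v) (seq.Z i) = 0) ∧
    (∀ i j : ℕ, i ≤ seq.m → j ≤ seq.m → i ≠ j → D.B (seq.Z i) (seq.Z j) = 0) ∧
    (∀ t ≤ seq.m + 1,
        chi D ZK (seq.s + ∑ i ∈ Finset.range t, seq.Z i) = 0 ∧
        chi D ZK (ZK - (seq.s + ∑ i ∈ Finset.range t, seq.Z i)) = 0) ∧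
    (∀ j ≤ seq.m, ∀ v ∈ seq.Bset j,
        D.B (Ev v) (ZK - (seq.s + ∑ i ∈ Finset.range j, seq.Z i)) =
          D.B (Ev v) (Ev v) + 2) := by
  refine ⟨fun j hj =>
      (chi_Z_eq_zero_and_B_eq_zero hell hj (chi_ZK_sub_C_eq_zero hell (by omega))).1,
    orthogonal_C hell, fun v hv => by simpa only [C_zero] using orthogonal_C_zero hell v hv,
    fun i j hij hj => B_Ev_Z_eq_zero hell hij hj, ?_, fun t ht => ?_, fun j hj v hv => ?_⟩
  · intro i j hi hj hne
    rcases hne.lt_or_gt with hij | hji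
    · rw [D.symm]
      exact B_Z_Z_eq_zero_of_lt hell hij hj
    · exact B_Z_Z_eq_zero_of_lt hell hji hi
  · have hS := chi_ZK_sub_C_eq_zero hell ht
    exact ⟨by rwa [chi_ZK_sub] at hS, hS⟩
  · rw [map_sub, ← C, orthogonal_C hell j hj v hv, sub_zero, D.symm]
    exact hZK v

/-- for a minimal elliptic lattice with an elliptic sequence, with
`C_{t-1} := s + ∑_{i < t} Z_{B_i}` (so `C_{-1} = s` and `C_m = Z_K`):
`χ(Z_{B_j}) = 0`; `(E_v, C_{j-1}) = 0` for `v ∈ B_j` (in particular `(E_v, s) = 0`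
on `B_0` and `(E_v, Z_{B_i}) = 0` for `i < j`, `v ∈ B_j`); `(Z_{B_i}, Z_{B_j}) = 0`
for `i ≠ j`; `χ(C_t) = 0` and `χ(Z_K - C_t) = 0` for `-1 ≤ t ≤ m`; and
`(E_v, Z_K - C_{j-1}) = (E_v,E_v) + 2` for `v ∈ B_j`, i.e. `Z_K - C_{j-1}`
is the canonical cycle of the subgraph supported on `B_j`. -/
theorem statement11 {V : Type*} [Fintype V] [DecidableEq V] [Nonempty V]
    (D : LatticeData V) (ZK : V → ℚ) (hZK : IsCanonical D ZK)
    (hmin : IsMinimal D) (hell : Elliptic D ZK)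
    (seq : EllSeq D ZK) :
    (∀ j ≤ seq.m, chi D ZK (seq.Z j) = 0) ∧
    (∀ j ≤ seq.m, ∀ v ∈ seq.Bset j,
        D.B (Ev v) (seq.s + ∑ i ∈ Finset.range j, seq.Z i) = 0) ∧
    (∀ v ∈ seq.Bset 0, D.B (Ev v) seq.s = 0) ∧
    (∀ i j : ℕ, i < j → j ≤ seq.m → ∀ v ∈ seq.Bset j, D.B (Ev v) (seq.Z i) = 0) ∧
    (∀ i j : ℕ, i ≤ seq.m → j ≤ seq.m → i ≠ j → D.B (seq.Z i) (seq.Z j) = 0) ∧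
    (∀ t ≤ seq.m + 1,
        chi D ZK (seq.s + ∑ i ∈ Finset.range t, seq.Z i) = 0 ∧
        chi D ZK (ZK - (seq.s + ∑ i ∈ Finset.range t, seq.Z i)) = 0) ∧
    (∀ j ≤ seq.m, ∀ v ∈ seq.Bset j,
        D.B (Ev v) (ZK - (seq.s + ∑ i ∈ Finset.range j, seq.Z i)) =
          D.B (Ev v) (Ev v) + 2) :=
  statement11_general D ZK hZK hell seq
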